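/- arXiv:2009.12616 — 3 statements merged into one kernel-verified Lean document; each statement's English description precedes it below -/
import Mathlib

section
/- Let (p, e, h) be a special deformation retract between chain complexes (V, d_V) and (W, d_W) satisfying the side conditions, and let δ : V → V be a perturbation (degree matching d_V, (d_V+δ)² = 0) with δ∘h nilpotent. Define P = p∘(id + δ∘h)⁻¹, E = (id + h∘δ)⁻¹∘e, H = h∘(id + δ∘h)⁻¹, and d_W' = d_W + p∘(id + δ∘h)⁻¹∘δ∘e. Then P∘E = id_W. -/
theorem perturbed_sdr_PE_eq_id {R V W : Type*} [CommRing R]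
    [AddCommGroup V] [Module R V] [AddCommGroup W] [Module R W]
    (dV : Module.End R V) (dW : Module.End R W)
    (hdV : dV * dV = 0) (hdW : dW * dW = 0)
    (p : V →ₗ[R] W) (e : W →ₗ[R] V) (h : Module.End R V)
    (hret : (1 : Module.End R V) - e ∘ₗ p = dV * h + h * dV)
    (hpe : p ∘ₗ e = LinearMap.id)
    (hph : p ∘ₗ h = 0) (hhe : h ∘ₗ e = 0) (hhh : h * h = 0)
    (hpd : p ∘ₗ dV = dW ∘ₗ p) (hde : dV ∘ₗ e = e ∘ₗ dW)
    (δ : Module.End R V) (hpert : (dV + δ) * (dV + δ) = 0)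
    (N : ℕ) (hnil : (δ * h) ^ N = 0) :
    (p ∘ₗ Ring.inverse (1 + δ * h)) ∘ₗ (Ring.inverse (1 + h * δ) ∘ₗ e) =
      LinearMap.id := by
  set A : Module.End R V := 1 + δ * h with hA
  set B : Module.End R V := 1 + h * δ with hB
  have uA : IsUnit A := IsNilpotent.isUnit_one_add ⟨N, hnil⟩
  have hnil' : (h * δ) ^ (N + 1) = 0 := by
    have key : ∀ n : ℕ, (h * δ) ^ (n + 1) = h * ((δ * h) ^ n * δ) := by
      intro n
      induction n with
      | zero => simp
      | succ n ih =>
        rw [pow_succ, ih, pow_succ]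
        noncomm_ring
    rw [key, hnil, zero_mul, mul_zero]
  have uB : IsUnit B := IsNilpotent.isUnit_one_add ⟨N + 1, hnil'⟩
  set Ai : Module.End R V := Ring.inverse A with hAi
  set Bi : Module.End R V := Ring.inverse B with hBi
  have hAAi : A * Ai = 1 := Ring.mul_inverse_cancel A uA
  have hAiA : Ai * A = 1 := Ring.inverse_mul_cancel A uA
  have hBBi : B * Bi = 1 := Ring.mul_inverse_cancel B uB
  have hBiB : Bi * B = 1 := Ring.inverse_mul_cancel B uB
  -- Ai * h = h  (since Ai = 1 - Ai * δ * h and h * h = 0)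
  have hAiEq : Ai = 1 - Ai * (δ * h) := by
    have h1 : Ai + Ai * (δ * h) = 1 := by
      rw [← mul_one Ai]
      calc Ai * 1 + Ai * 1 * (δ * h) = Ai * (1 + δ * h) := by noncomm_ring
      _ = 1 := by rw [← hA, hAiA]
    exact eq_sub_of_add_eq h1
  have hAih : Ai * h = h := by
    calc Ai * h = (1 - Ai * (δ * h)) * h := by rw [← hAiEq]
    _ = h - Ai * δ * (h * h) := by noncomm_ring
    _ = h := by rw [hhh, mul_zero, sub_zero]
  -- Bi * h = h * Ai
  have hcomm : h * A = B * h := by rw [hA, hB]; noncomm_ring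
  have hBih : Bi * h = h * Ai := by
    have : Bi * (h * A) * Ai = Bi * (B * h) * Ai := by rw [hcomm]
    calc Bi * h = Bi * h * (A * Ai) := by rw [hAAi, mul_one]
    _ = Bi * (B * h) * Ai := by rw [← hcomm]; noncomm_ring
    _ = (Bi * B) * h * Ai := by noncomm_ring
    _ = h * Ai := by rw [hBiB, one_mul]
  -- Ai ∘ₗ e = e
  have hdhe : (δ * h) ∘ₗ e = 0 := by
    have : (δ * h) ∘ₗ e = δ ∘ₗ (h ∘ₗ e) := by
      ext x; rfl
    rw [this, hhe, LinearMap.comp_zero]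
  have hAie : Ai ∘ₗ e = e := by
    conv_lhs => rw [hAiEq]
    rw [LinearMap.sub_comp]
    rw [show (1 : Module.End R V) ∘ₗ e = e from rfl]
    have : (Ai * (δ * h)) ∘ₗ e = Ai ∘ₗ ((δ * h) ∘ₗ e) := by
      ext x; rfl
    rw [this, hdhe, LinearMap.comp_zero, sub_zero]
  -- Bi ∘ₗ e = e - (Bi * (h * δ)) ∘ₗ e
  have hBiEq : Bi = 1 - Bi * (h * δ) := by
    have h1 : Bi + Bi * (h * δ) = 1 := by
      calc Bi + Bi * (h * δ) = Bi * (1 + h * δ) := by noncomm_ring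
      _ = 1 := by rw [← hB, hBiB]
    exact eq_sub_of_add_eq h1
  have expand : Bi ∘ₗ e = e - ((h * Ai * δ) ∘ₗ e) := by
    conv_lhs => rw [hBiEq]
    rw [LinearMap.sub_comp]
    rw [show (1 : Module.End R V) ∘ₗ e = e from rfl]
    congr 1
    have : Bi * (h * δ) = h * Ai * δ := by
      rw [← mul_assoc, hBih]
    rw [this]
  -- main computation
  rw [expand]
  rw [LinearMap.comp_sub]
  have t1 : (p ∘ₗ Ai) ∘ₗ e = LinearMap.id := by
    rw [LinearMap.comp_assoc, hAie, hpe]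
  have t2 : (p ∘ₗ Ai) ∘ₗ ((h * Ai * δ) ∘ₗ e) = 0 := by
    have : (p ∘ₗ Ai) ∘ₗ ((h * Ai * δ) ∘ₗ e) = (p ∘ₗ (Ai * h)) ∘ₗ ((Ai * δ) ∘ₗ e) := by
      ext x; simp [Module.End.mul_apply]
    rw [this, hAih]
    have : p ∘ₗ h = 0 := hph
    calc (p ∘ₗ h) ∘ₗ ((Ai * δ) ∘ₗ e) = (0 : V →ₗ[R] W) ∘ₗ ((Ai * δ) ∘ₗ e) := by rw [hph]
    _ = 0 := LinearMap.zero_comp _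
  rw [t1, t2, sub_zero]
end

section
/- With the hypotheses of the perturbed deformation retract above (side conditions p∘h = h∘e = h∘h = 0, p∘e = id, and δ∘h nilpotent), the perturbed homotopy H = h∘(id + δ∘h)⁻¹ satisfies H∘H = 0, P∘H = 0, and H∘E = 0. -/
private lemma pow_swap_mul {M : Type*} [Monoid M] (a b : M) :
    ∀ n : ℕ, (a * b) ^ (n + 1) = a * (b * a) ^ n * b
  | 0 => by simp
  | n + 1 => by
    rw [pow_succ, pow_swap_mul a b n, pow_succ]
    simp [mul_assoc]

theorem perturbed_sdr_side_conditions {R V W : Type*} [CommRing R]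
    [AddCommGroup V] [Module R V] [AddCommGroup W] [Module R W]
    (dV : Module.End R V) (dW : Module.End R W)
    (hdV : dV * dV = 0) (hdW : dW * dW = 0)
    (p : V →ₗ[R] W) (e : W →ₗ[R] V) (h : Module.End R V)
    (hret : (1 : Module.End R V) - e ∘ₗ p = dV * h + h * dV)
    (hpe : p ∘ₗ e = LinearMap.id)
    (hph : p ∘ₗ h = 0) (hhe : h ∘ₗ e = 0) (hhh : h * h = 0)
    (hpd : p ∘ₗ dV = dW ∘ₗ p) (hde : dV ∘ₗ e = e ∘ₗ dW)
    (δ : Module.End R V) (hpert : (dV + δ) * (dV + δ) = 0)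
    (N : ℕ) (hnil : (δ * h) ^ N = 0) :
    (h * Ring.inverse (1 + δ * h)) * (h * Ring.inverse (1 + δ * h)) = 0 ∧
    (p ∘ₗ Ring.inverse (1 + δ * h)) ∘ₗ (h * Ring.inverse (1 + δ * h)) = 0 ∧
    (h * Ring.inverse (1 + δ * h)) ∘ₗ (Ring.inverse (1 + h * δ) ∘ₗ e) = 0 := by
  set A : Module.End R V := 1 + δ * h with hA_def
  set B : Module.End R V := 1 + h * δ with hB_def
  have hAunit : IsUnit A := IsNilpotent.isUnit_one_add ⟨N, hnil⟩
  have hBnil : IsNilpotent (h * δ) := by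
    refine ⟨N + 1, ?_⟩
    rw [pow_swap_mul, hnil, mul_zero, zero_mul]
  have hBunit : IsUnit B := IsNilpotent.isUnit_one_add hBnil
  -- A * h = h since h * h = 0
  have hAh : A * h = h := by
    rw [hA_def, add_mul, one_mul, mul_assoc, hhh, mul_zero, add_zero]
  -- h * B = h
  have hhB : h * B = h := by
    rw [hB_def, mul_add, mul_one, ← mul_assoc, hhh, zero_mul, add_zero]
  -- Ring.inverse A * h = h
  have hinvAh : Ring.inverse A * h = h := by
    conv_lhs => rw [← hAh, ← mul_assoc, Ring.inverse_mul_cancel _ hAunit, one_mul]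
  -- h * Ring.inverse B = h
  have hhinvB : h * Ring.inverse B = h := by
    conv_lhs => rw [← hhB, mul_assoc, Ring.mul_inverse_cancel _ hBunit, mul_one]
  -- h * A = B * h
  have hcomm : h * A = B * h := by
    rw [hA_def, hB_def, mul_add, add_mul, mul_one, one_mul, mul_assoc]
  -- h * A⁻¹ = B⁻¹ * h
  have hswap : h * Ring.inverse A = Ring.inverse B * h := by
    have : Ring.inverse B * (h * A) * Ring.inverse A
        = Ring.inverse B * (B * h) * Ring.inverse A := by rw [hcomm]
    calc h * Ring.inverse A
        = Ring.inverse B * (B * h) * Ring.inverse A := by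
          rw [← mul_assoc, Ring.inverse_mul_cancel _ hBunit, one_mul]
      _ = Ring.inverse B * (h * A) * Ring.inverse A := by rw [hcomm]
      _ = Ring.inverse B * h := by
          rw [mul_assoc, mul_assoc, Ring.mul_inverse_cancel _ hAunit, mul_one]
  refine ⟨?_, ?_, ?_⟩
  · calc h * Ring.inverse A * (h * Ring.inverse A)
        = h * (Ring.inverse A * h) * Ring.inverse A := by
          rw [mul_assoc, ← mul_assoc (Ring.inverse A) h, ← mul_assoc]
      _ = 0 := by rw [hinvAh, hhh, zero_mul]
  · have : (p ∘ₗ Ring.inverse A) ∘ₗ (h * Ring.inverse A)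
        = p ∘ₗ ((Ring.inverse A * h) * Ring.inverse A) := by
      rw [LinearMap.comp_assoc, mul_assoc]; rfl
    rw [this, hinvAh]
    rw [show (h * Ring.inverse A : Module.End R V) = h ∘ₗ Ring.inverse A from rfl,
      ← LinearMap.comp_assoc, hph, LinearMap.zero_comp]
  · have : (h * Ring.inverse A) ∘ₗ (Ring.inverse B ∘ₗ e)
        = ((h * Ring.inverse A) * Ring.inverse B) ∘ₗ e := by
      rw [← LinearMap.comp_assoc]; rfl
    rw [this, hswap, mul_assoc]
    have : (h * Ring.inverse B : Module.End R V) = h := by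
      rw [hhinvB]
    rw [show (Ring.inverse B * (h * Ring.inverse B) : Module.End R V)
        = Ring.inverse B * h by rw [this]]
    rw [show ((Ring.inverse B * h : Module.End R V) ∘ₗ e)
        = Ring.inverse B ∘ₗ (h ∘ₗ e) from rfl, hhe, LinearMap.comp_zero]
end

section
/- Let h : V → V, e : W → V, p : V → W satisfy h∘h = 0, h∘e = 0, p∘h = 0, and p∘e = id_W. Define H₀ = ∑_{i+j=k−1} id^{⊗i} ⊗ h ⊗ (e∘p)^{⊗j} on V^{⊗k}. Then H₀∘H₀ = 0. -/
open scoped TensorProduct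

theorem map_zero_of_coord_zero {R : Type*} [CommRing R] {ι : Type*} [Fintype ι] [DecidableEq ι]
    {M N : ι → Type*} [∀ i, AddCommGroup (M i)] [∀ i, Module R (M i)]
    [∀ i, AddCommGroup (N i)] [∀ i, Module R (N i)]
    (f : ∀ i, M i →ₗ[R] N i) (c : ι) (hc : f c = 0) :
    PiTensorProduct.map f = 0 := by
  ext x
  simp only [LinearMap.compMultilinearMap_apply, PiTensorProduct.map_tprod,
    LinearMap.zero_apply]
  have : (fun i => f i (x i)) = Function.update (fun i => f i (x i)) c 0 := by
    funext i
    rcases eq_or_ne i c with rfl | hi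
    · simp [hc]
    · simp [Function.update_of_ne hi]
  rw [this]
  exact MultilinearMap.map_update_zero _ _ _

theorem tensor_trick_H0_squared_zero {R V W : Type*} [CommRing R]
    [AddCommGroup V] [Module R V] [AddCommGroup W] [Module R W]
    (h : V →ₗ[R] V) (e : W →ₗ[R] V) (p : V →ₗ[R] W)
    (hhh : h ∘ₗ h = 0) (hhe : h ∘ₗ e = 0) (hph : p ∘ₗ h = 0)
    (hpe : p ∘ₗ e = LinearMap.id) (k : ℕ) :
    (∑ i : Fin k, PiTensorProduct.map (fun t : Fin k =>
        if t.val < i.val then (LinearMap.id : V →ₗ[R] V)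
        else if t = i then h else e ∘ₗ p)) ∘ₗ
      (∑ i : Fin k, PiTensorProduct.map (fun t : Fin k =>
        if t.val < i.val then (LinearMap.id : V →ₗ[R] V)
        else if t = i then h else e ∘ₗ p)) = 0 := by
  rw [← Module.End.mul_eq_comp, Finset.sum_mul]
  refine Finset.sum_eq_zero fun i _ => ?_
  rw [Finset.mul_sum]
  refine Finset.sum_eq_zero fun j _ => ?_
  rw [Module.End.mul_eq_comp]
  rw [← PiTensorProduct.map_comp]
  rcases lt_trichotomy i j with hij | rfl | hij
  · refine map_zero_of_coord_zero _ j ?_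
    have h1 : ¬ (j.val < i.val) := by omega
    have h2 : j ≠ i := Fin.ne_of_gt hij
    simp only [h1, if_false, if_neg h2, if_neg (lt_irrefl j.val), if_pos rfl, if_true]
    rw [LinearMap.comp_assoc, hph, LinearMap.comp_zero]
  · refine map_zero_of_coord_zero _ i ?_
    simp only [if_neg (lt_irrefl i.val), if_pos rfl, if_true]
    exact hhh
  · refine map_zero_of_coord_zero _ i ?_
    have h1 : ¬ (i.val < j.val) := by omega
    have h2 : i ≠ j := Fin.ne_of_gt hij
    simp only [if_neg (lt_irrefl i.val), h1, if_false, if_pos rfl, if_neg h2, if_true]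
    rw [← LinearMap.comp_assoc, hhe, LinearMap.zero_comp]
end
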